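/- arXiv:2605.07624 — 2 statements merged into one kernel-verified Lean document; each statement's English description precedes it below -/
import Mathlib

section
/- Let 𝒳, 𝒴, 𝒵 be finite alphabets, 𝒜 a finite nonempty action set, g : 𝒳 × 𝒜 → ℝ a gain function, and let φ, ψ : ℝ → ℝ be strictly increasing continuous bijections such that the map p ↦ ψ(V_{φ,g}(p)) is convex on the probability simplex Δ_𝒳. Let p_{X,Y,Z} be a joint distribution forming a Markov chain X − Y − Z with strictly positive marginals p_Y and p_Z. Then the data-processing inequality holds: V̂_{ψ,φ,g}(X|Z) ≤ V̂_{ψ,φ,g}(X|Y); equivalently, the (ψ,φ,g)-posterior conditional entropy Ĥ_{ψ,φ,g} := −V̂_{ψ,φ,g} satisfies Ĥ_{ψ,φ,g}(X|Y) ≤ Ĥ_{ψ,φ,g}(X|Z). -/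
/-- The generalized g-prior vulnerability of a distribution `p` on `𝒳`:
`V_{φ,g}(p) := max_{a∈𝒜} φ⁻¹(Σ_x p(x)·φ(g(x,a)))`, where `φinv` denotes the inverse
of `φ`. -/
noncomputable def Vprior {𝒳 𝒜 : Type*} [Fintype 𝒳] [Fintype 𝒜] [Nonempty 𝒜]
    (φ φinv : ℝ → ℝ) (g : 𝒳 → 𝒜 → ℝ) (p : 𝒳 → ℝ) : ℝ :=
  Finset.univ.sup' Finset.univ_nonempty fun a => φinv (∑ x, p x * φ (g x a))

/-- The generalized average g-posterior conditional vulnerability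
`V̂_{ψ,φ,g}(X|Y) = ψ⁻¹(Σ_y p_Y(y)·ψ(V_{φ,g}(p_{X|Y}(·|y))))` for a joint distribution `p`
on `𝒳 × 𝒴`, where `p_Y(y) = Σ_x p(x,y)` and `p_{X|Y}(x|y) = p(x,y)/p_Y(y)`. -/
noncomputable def Vhat {𝒳 𝒴 𝒜 : Type*} [Fintype 𝒳] [Fintype 𝒴] [Fintype 𝒜] [Nonempty 𝒜]
    (p : 𝒳 → 𝒴 → ℝ) (ψ ψinv φ φinv : ℝ → ℝ) (g : 𝒳 → 𝒜 → ℝ) : ℝ :=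
  ψinv (∑ y, (∑ x, p x y) *
    ψ (Vprior φ φinv g (fun x => p x y / ∑ x', p x' y)))

/-!
Under the Markov chain `X − Y − Z`, each posterior `p_{X|Z}(·|z)` is the mixture
`Σ_y p_{Y|Z}(y|z) · p_{X|Y}(·|y)`. Jensen's inequality for the convex map `q ↦ ψ(V_{φ,g}(q))`
bounds its value at `p_{X|Z}(·|z)` by the mixture of its values at the `p_{X|Y}(·|y)`;
averaging over `z` turns the weights `p_Z(z) p_{Y|Z}(y|z)` into `p_Y(y)`, and the monotone
map `ψ⁻¹` preserves the inequality.
-/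

open Finset

theorem StrictMono.monotone_invFun {α β : Type*} [Nonempty α] [LinearOrder α] [Preorder β]
    {f : α → β} (hf : StrictMono f) (hsurj : Function.Surjective f) :
    Monotone (Function.invFun f) := fun a b hab => by
  rwa [← hf.le_iff_le, Function.invFun_eq (hsurj a), Function.invFun_eq (hsurj b)]

section Posterior

variable {𝒳 𝒴 𝒵 : Type*} [Fintype 𝒳]

/-- The posterior `q_{X|Y}(·|y)` of a joint weight `q` on `𝒳 × 𝒴`. -/
noncomputable def condFst (q : 𝒳 → 𝒴 → ℝ) (y : 𝒴) : 𝒳 → ℝ :=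
  fun x => q x y / ∑ x', q x' y

theorem condFst_mem_stdSimplex {q : 𝒳 → 𝒴 → ℝ} (hq : ∀ x y, 0 ≤ q x y) {y : 𝒴}
    (hy : ∑ x, q x y ≠ 0) : condFst q y ∈ stdSimplex ℝ 𝒳 :=
  ⟨fun x => div_nonneg (hq x y) (sum_nonneg fun x' _ => hq x' y),
    by simp only [condFst, ← sum_div, div_self hy]⟩

theorem marginal_mul_condFst {q : 𝒳 → 𝒴 → ℝ} {y : 𝒴} (hy : ∑ x, q x y ≠ 0) (x : 𝒳) :
    (∑ x', q x' y) * condFst q y x = q x y :=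
  mul_div_cancel₀ _ hy

variable [Fintype 𝒴] [Fintype 𝒵]

noncomputable def posteriorAverage (F : (𝒳 → ℝ) → ℝ) (q : 𝒳 → 𝒴 → ℝ) : ℝ :=
  ∑ y, (∑ x, q x y) * F (condFst q y)

def IsMarkovChain (p : 𝒳 → 𝒴 → 𝒵 → ℝ) : Prop :=
  ∀ x y z, p x y z * (∑ x', ∑ z', p x' y z') = (∑ z', p x y z') * (∑ x', p x' y z)

variable {p : 𝒳 → 𝒴 → 𝒵 → ℝ}

theorem IsMarkovChain.condFst_eq_sum (hp : IsMarkovChain p)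
    (hpY : ∀ y, ∑ x, ∑ z, p x y z ≠ 0) (z : 𝒵) :
    condFst (fun x z => ∑ y, p x y z) z =
      ∑ y, condFst (fun y z => ∑ x, p x y z) z y • condFst (fun x y => ∑ z, p x y z) y := by
  funext x
  have hterm : ∀ y, condFst (fun y z => ∑ x, p x y z) z y *
      condFst (fun x y => ∑ z, p x y z) y x = p x y z / ∑ x', ∑ y, p x' y z := fun y => by
    rw [condFst, condFst, sum_comm (f := fun x y => p x y z), div_mul_div_comm,
      mul_comm (∑ x, p x y z), ← hp x y z, mul_div_mul_right _ _ (hpY y)]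
  simp only [Finset.sum_apply, Pi.smul_apply, smul_eq_mul, hterm, ← sum_div]
  rfl

theorem IsMarkovChain.posteriorAverage_le {F : (𝒳 → ℝ) → ℝ}
    (hF : ConvexOn ℝ (stdSimplex ℝ 𝒳) F) (hp : IsMarkovChain p) (hp0 : ∀ x y z, 0 ≤ p x y z)
    (hpY : ∀ y, ∑ x, ∑ z, p x y z ≠ 0) (hpZ : ∀ z, ∑ x, ∑ y, p x y z ≠ 0) :
    posteriorAverage F (fun x z => ∑ y, p x y z) ≤
      posteriorAverage F (fun x y => ∑ z, p x y z) := by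
  set qXY : 𝒳 → 𝒴 → ℝ := fun x y => ∑ z, p x y z
  set qYZ : 𝒴 → 𝒵 → ℝ := fun y z => ∑ x, p x y z
  have hqYZ0 : ∀ y z, 0 ≤ qYZ y z := fun y z => sum_nonneg fun x _ => hp0 x y z
  have hqYZ : ∀ z, ∑ y, qYZ y z ≠ 0 := fun z => by rw [sum_comm]; exact hpZ z
  have hjensen : ∀ z, F (condFst (fun x z => ∑ y, p x y z) z) ≤
      ∑ y, condFst qYZ z y * F (condFst qXY y) := fun z => by
    rw [hp.condFst_eq_sum hpY z]
    exact hF.map_sum_le (fun y _ => (condFst_mem_stdSimplex hqYZ0 (hqYZ z)).1 y)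
      (condFst_mem_stdSimplex hqYZ0 (hqYZ z)).2
      (fun y _ => condFst_mem_stdSimplex (fun x y => sum_nonneg fun z _ => hp0 x y z) (hpY y))
  calc posteriorAverage F (fun x z => ∑ y, p x y z)
      ≤ ∑ z, (∑ y, qYZ y z) * ∑ y, condFst qYZ z y * F (condFst qXY y) := by
        refine sum_le_sum fun z _ => ?_
        rw [sum_comm (f := fun x y => p x y z)]
        exact mul_le_mul_of_nonneg_left (hjensen z) (sum_nonneg fun y _ => hqYZ0 y z)
    _ = ∑ y, (∑ z, qYZ y z) * F (condFst qXY y) := by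
        simp only [mul_sum, ← mul_assoc, marginal_mul_condFst (hqYZ _), sum_mul]
        exact sum_comm
    _ = posteriorAverage F qXY := by
        simp only [posteriorAverage, qXY, qYZ, sum_comm (f := fun z x => p x _ z)]

end Posterior

theorem Vhat_DPI_general {𝒳 𝒴 𝒵 𝒜 : Type*} [Fintype 𝒳] [Fintype 𝒴] [Fintype 𝒵]
    [Fintype 𝒜] [Nonempty 𝒜]
    (g : 𝒳 → 𝒜 → ℝ) (φ ψ : ℝ → ℝ)
    (hψ : StrictMono ψ) (hψb : Function.Bijective ψ)
    (hconv : ConvexOn ℝ (stdSimplex ℝ 𝒳)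
      (fun q => ψ (Vprior φ (Function.invFun φ) g q)))
    (p : 𝒳 → 𝒴 → 𝒵 → ℝ) (hp0 : ∀ x y z, 0 ≤ p x y z)
    (hpY : ∀ y, 0 < ∑ x, ∑ z, p x y z) (hpZ : ∀ z, 0 < ∑ x, ∑ y, p x y z)
    (hMarkov : ∀ x y z, p x y z * (∑ x', ∑ z', p x' y z') =
      (∑ z', p x y z') * (∑ x', p x' y z)) :
    Vhat (fun x z => ∑ y, p x y z) ψ (Function.invFun ψ) φ (Function.invFun φ) g ≤
      Vhat (fun x y => ∑ z, p x y z) ψ (Function.invFun ψ) φ (Function.invFun φ) g :=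
  -- `Vhat q ψ ψ⁻¹ φ φ⁻¹ g` is definitionally `ψ⁻¹ (posteriorAverage (ψ ∘ V_{φ,g}) q)`.
  hψ.monotone_invFun hψb.surjective <|
    IsMarkovChain.posteriorAverage_le hconv hMarkov hp0 (fun y => (hpY y).ne') fun z => (hpZ z).ne'

/-- If `φ, ψ` are strictly increasing continuous bijections such that
`p ↦ ψ(V_{φ,g}(p))` is convex on the simplex `Δ_𝒳`, and `p_{X,Y,Z}` forms a Markov chain
`X − Y − Z` with strictly positive marginals `p_Y`, `p_Z`, then the data-processing
inequality holds: `V̂_{ψ,φ,g}(X|Z) ≤ V̂_{ψ,φ,g}(X|Y)`, i.e.,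
`Ĥ_{ψ,φ,g}(X|Y) ≤ Ĥ_{ψ,φ,g}(X|Z)`. -/
theorem Vhat_DPI {𝒳 𝒴 𝒵 𝒜 : Type*} [Fintype 𝒳] [Fintype 𝒴] [Fintype 𝒵]
    [Fintype 𝒜] [Nonempty 𝒜]
    (g : 𝒳 → 𝒜 → ℝ) (φ ψ : ℝ → ℝ)
    (hφ : StrictMono φ) (hφc : Continuous φ) (hφb : Function.Bijective φ)
    (hψ : StrictMono ψ) (hψc : Continuous ψ) (hψb : Function.Bijective ψ)
    (hconv : ConvexOn ℝ (stdSimplex ℝ 𝒳)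
      (fun q => ψ (Vprior φ (Function.invFun φ) g q)))
    (p : 𝒳 → 𝒴 → 𝒵 → ℝ) (hp0 : ∀ x y z, 0 ≤ p x y z)
    (hp1 : ∑ x, ∑ y, ∑ z, p x y z = 1)
    (hpY : ∀ y, 0 < ∑ x, ∑ z, p x y z) (hpZ : ∀ z, 0 < ∑ x, ∑ y, p x y z)
    (hMarkov : ∀ x y z, p x y z * (∑ x', ∑ z', p x' y z') =
      (∑ z', p x y z') * (∑ x', p x' y z)) :
    Vhat (fun x z => ∑ y, p x y z) ψ (Function.invFun ψ) φ (Function.invFun φ) g ≤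
      Vhat (fun x y => ∑ z, p x y z) ψ (Function.invFun ψ) φ (Function.invFun φ) g :=
  Vhat_DPI_general g φ ψ hψ hψb hconv p hp0 hpY hpZ hMarkov
end

section
/- Let 𝒳, 𝒴 be finite alphabets, 𝒜 a finite nonempty action set, g : 𝒳 × 𝒜 → ℝ a gain function, and let φ, ψ : ℝ → ℝ be strictly increasing continuous bijections such that the map p ↦ ψ(V_{φ,g}(p)) is convex on the probability simplex Δ_𝒳. Let p_{X,Y} be a joint distribution with strictly positive marginal p_Y. Then V̂_{ψ,φ,g}(X|Y) ≥ V_{φ,g}(p_X); equivalently, conditioning reduces entropy (CRE): Ĥ_{ψ,φ,g}(X|Y) := −V̂_{ψ,φ,g}(X|Y) ≤ −V_{φ,g}(p_X) =: H_{φ,g}(X). -/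
/-- If `φ, ψ` are strictly increasing continuous bijections such that
`p ↦ ψ(V_{φ,g}(p))` is convex on the simplex `Δ_𝒳`, then for every joint distribution
with strictly positive marginal `p_Y`, `V̂_{ψ,φ,g}(X|Y) ≥ V_{φ,g}(p_X)`; equivalently,
conditioning reduces entropy: `Ĥ_{ψ,φ,g}(X|Y) ≤ H_{φ,g}(X)`. -/
theorem Vhat_CRE {𝒳 𝒴 𝒜 : Type*} [Fintype 𝒳] [Fintype 𝒴] [Fintype 𝒜] [Nonempty 𝒜]
    (g : 𝒳 → 𝒜 → ℝ) (φ ψ : ℝ → ℝ)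
    (hφ : StrictMono φ) (hφc : Continuous φ) (hφb : Function.Bijective φ)
    (hψ : StrictMono ψ) (hψc : Continuous ψ) (hψb : Function.Bijective ψ)
    (hconv : ConvexOn ℝ (stdSimplex ℝ 𝒳)
      (fun q => ψ (Vprior φ (Function.invFun φ) g q)))
    (p : 𝒳 → 𝒴 → ℝ) (hp0 : ∀ x y, 0 ≤ p x y) (hp1 : ∑ x, ∑ y, p x y = 1)
    (hpY : ∀ y, 0 < ∑ x, p x y) :
    Vprior φ (Function.invFun φ) g (fun x => ∑ y, p x y) ≤
      Vhat p ψ (Function.invFun ψ) φ (Function.invFun φ) g := by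
  classical
  have hψinv := Function.rightInverse_invFun hψb.2
  set q : 𝒴 → 𝒳 → ℝ := fun y x => p x y / ∑ x', p x' y with hq
  have hmem : ∀ y ∈ Finset.univ, q y ∈ stdSimplex ℝ 𝒳 := by
    intro y _
    refine ⟨fun x => div_nonneg (hp0 x y) (hpY y).le, ?_⟩
    rw [← Finset.sum_div]
    exact div_self (hpY y).ne'
  have hw0 : ∀ y ∈ Finset.univ, (0:ℝ) ≤ ∑ x, p x y := fun y _ => (hpY y).le
  have hw1 : ∑ y, ∑ x, p x y = 1 := by rw [Finset.sum_comm]; exact hp1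
  have hsum : (∑ y, (∑ x, p x y) • q y) = fun x => ∑ y, p x y := by
    funext x
    simp only [Finset.sum_apply, Pi.smul_apply, smul_eq_mul, hq]
    refine Finset.sum_congr rfl fun y _ => ?_
    rw [mul_div_cancel₀ _ (hpY y).ne']
  have hJ := hconv.map_sum_le hw0 hw1 hmem
  rw [hsum] at hJ
  have key : ψ (Vprior φ (Function.invFun φ) g (fun x => ∑ y, p x y)) ≤
      ψ (Vhat p ψ (Function.invFun ψ) φ (Function.invFun φ) g) := by
    unfold Vhat
    rw [hψinv]
    simpa [smul_eq_mul] using hJ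
  exact hψ.le_iff_le.mp key
end
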